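/- Let E be a row-finite directed graph, t ≥ 0 an integer, and f : E^t → ℂ a function vanishing at infinity, i.e. for every ε > 0 the set {λ ∈ E^t : |f(λ)| ≥ ε} is finite. Then Φ^t f vanishes at infinity on E⁰: for every ε > 0 the set {v ∈ E⁰ : |Φ^t f(v)| ≥ ε} is finite. (Thus Φ^t maps C₀(E^t) into C₀(E⁰).) -/
import Mathlib


/-- A directed graph with vertex set `V` and edge set `E`. -/
structure DirGraph (V E : Type) where
  src : E → V
  rng : E → V

namespace DirGraph

variable {V E : Type}

/-- A vertex is a sink if no edge emanates from it. -/
def IsSink (G : DirGraph V E) (v : V) : Prop := ∀ e : E, G.src e ≠ v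

/-- A graph is row-finite if every vertex emits only finitely many edges. -/
def RowFinite (G : DirGraph V E) : Prop := ∀ v : V, {e : E | G.src e = v}.Finite

/-- `G.ChainFrom v l` : the list of edges `l` forms a path starting at the vertex `v`. -/
def ChainFrom (G : DirGraph V E) : V → List E → Prop
  | _, [] => True
  | v, e :: es => G.src e = v ∧ G.ChainFrom (G.rng e) es

@[simp] theorem chainFrom_nil (G : DirGraph V E) (v : V) : G.ChainFrom v [] ↔ True := Iff.rfl

@[simp] theorem chainFrom_cons (G : DirGraph V E) (v : V) (e : E) (es : List E) :
    G.ChainFrom v (e :: es) ↔ G.src e = v ∧ G.ChainFrom (G.rng e) es := Iff.rfl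

/-- A finite path in `G`: a starting vertex together with a compatible list of edges.
(Paths of length `0` are identified with their starting vertex.) -/
structure GPath (G : DirGraph V E) where
  start : V
  edges : List E
  ok : G.ChainFrom start edges

namespace GPath

variable {G : DirGraph V E}

/-- The range (terminal vertex) of a path. -/
def range (p : GPath G) : V := (p.edges.getLast?.map G.rng).getD p.start

/-- `n_λ = ∏_{i=1}^{|λ|} |s⁻¹(s(e_i))|` for a path `λ = e₁⋯e_k`; equals `1` for paths of
length zero. -/
noncomputable def nval (p : GPath G) : ℕ :=
  (p.edges.map (fun e => {f : E | G.src f = G.src e}.ncard)).prod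

end GPath

/-- Membership in `E^t`: paths of length exactly `t`, together with the paths of length
`< t` whose range is a sink. -/
def MemE (G : DirGraph V E) (t : ℕ) (p : GPath G) : Prop :=
  p.edges.length = t ∨ (p.edges.length < t ∧ G.IsSink p.range)

/-- The set `E^t` of paths of length `t` together with shorter paths ending in a sink. -/
def EtP (G : DirGraph V E) (t : ℕ) : Type _ := {p : GPath G // G.MemE t p}


/-- The conditional expectation `Φ^t : C₀(E^t) → C₀(E⁰)`,
`(Φ^t f)(v) = Σ_{λ ∈ E^t, s(λ)=v} f(λ)/n_λ`. -/
noncomputable def Phi (G : DirGraph V E) (t : ℕ) (f : G.EtP t → ℂ) (v : V) : ℂ :=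
  ∑ᶠ p ∈ {q : G.EtP t | q.1.start = v}, f p / ((p : G.EtP t).1.nval : ℂ)

end DirGraph


namespace DirGraph

variable {V E : Type}

section Aux

variable (G : DirGraph V E)

/-- Range of a list of edges starting at `v`. -/
def rangeOf (v : V) (l : List E) : V := (l.getLast?.map G.rng).getD v

noncomputable def nvalL (l : List E) : ℕ := (l.map (fun e => {f : E | G.src f = G.src e}.ncard)).prod

def Mset (t : ℕ) (v : V) : Set (List E) :=
  {l | G.ChainFrom v l ∧ (l.length = t ∨ (l.length < t ∧ G.IsSink (G.rangeOf v l)))}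

variable {G}

theorem nvalL_pos (hG : G.RowFinite) (l : List E) : 0 < G.nvalL l := by
  apply List.prod_pos
  intro n hn
  simp only [nvalL, List.mem_map] at hn
  obtain ⟨e, -, rfl⟩ := hn
  exact Set.ncard_pos (hG _) |>.2 ⟨e, rfl⟩

theorem nvalL_cons (e : E) (l : List E) :
    G.nvalL (e :: l) = {f : E | G.src f = G.src e}.ncard * G.nvalL l := by
  simp [nvalL]

theorem rangeOf_cons (v : V) (e : E) (l : List E) :
    G.rangeOf v (e :: l) = G.rangeOf (G.rng e) l := by
  cases l with
  | nil => simp [rangeOf]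
  | cons f fs =>
    obtain ⟨x, hx⟩ : ∃ x, (f :: fs).getLast? = some x := by
      cases h : (f :: fs).getLast? with
      | none => simp at h
      | some x => exact ⟨x, rfl⟩
    simp [rangeOf, List.getLast?_cons_cons, hx]

theorem chains_finite (hG : G.RowFinite) :
    ∀ t : ℕ, ∀ v : V, {l : List E | G.ChainFrom v l ∧ l.length ≤ t}.Finite := by
  intro t
  induction t with
  | zero =>
    intro v
    apply Set.Finite.subset (Set.finite_singleton ([] : List E))
    rintro l ⟨-, hl⟩
    simpa using List.length_eq_zero_iff.mp (Nat.le_zero.mp hl)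
  | succ t ih =>
    intro v
    apply Set.Finite.subset
      (Set.Finite.union (Set.finite_singleton ([] : List E))
        (Set.Finite.biUnion (hG v)
          (fun e _ => ((ih (G.rng e)).image (fun l => e :: l)))))
    rintro l ⟨hc, hl⟩
    cases l with
    | nil => exact Or.inl rfl
    | cons e es =>
      refine Or.inr (Set.mem_biUnion hc.1 ?_)
      exact ⟨es, ⟨hc.2, by simpa using hl⟩, rfl⟩

theorem Mset_finite (hG : G.RowFinite) (t : ℕ) (v : V) : (G.Mset t v).Finite := by
  apply Set.Finite.subset (chains_finite hG t v)
  rintro l ⟨hc, hl⟩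
  exact ⟨hc, by rcases hl with h | ⟨h, -⟩ <;> omega⟩

theorem Mset_zero (v : V) : G.Mset 0 v = {[]} := by
  ext l
  constructor
  · rintro ⟨-, h | ⟨h, -⟩⟩
    · exact List.length_eq_zero_iff.mp h
    · omega
  · rintro rfl
    exact ⟨trivial, Or.inl rfl⟩

theorem Mset_succ_sink {v : V} (hv : G.IsSink v) (t : ℕ) : G.Mset (t + 1) v = {[]} := by
  ext l
  constructor
  · rintro ⟨hc, -⟩
    cases l with
    | nil => rfl
    | cons e es => exact absurd hc.1 (hv e)
  · rintro rfl
    exact ⟨trivial, Or.inr ⟨Nat.succ_pos t, hv⟩⟩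

theorem Mset_succ_not_sink {v : V} (hv : ¬ G.IsSink v) (t : ℕ) :
    G.Mset (t + 1) v = ⋃ e ∈ {e : E | G.src e = v}, (fun l => e :: l) '' G.Mset t (G.rng e) := by
  ext l
  constructor
  · rintro ⟨hc, hl⟩
    cases l with
    | nil =>
      exfalso
      rcases hl with h | ⟨-, hs⟩
      · simp at h
      · exact hv hs
    | cons e es =>
      refine Set.mem_biUnion hc.1 ⟨es, ⟨hc.2, ?_⟩, rfl⟩
      rcases hl with h | ⟨h, hs⟩
      · exact Or.inl (by simpa using h)
      · exact Or.inr ⟨by simpa using h, by rwa [rangeOf_cons] at hs⟩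
  · intro h
    simp only [Set.mem_iUnion, Set.mem_image] at h
    obtain ⟨e, he, es, ⟨hc, hl⟩, rfl⟩ := h
    refine ⟨⟨he, hc⟩, ?_⟩
    rcases hl with h | ⟨h, hs⟩
    · exact Or.inl (by simp [h])
    · exact Or.inr ⟨by simpa using Nat.succ_lt_succ h, by rwa [rangeOf_cons]⟩

theorem sum_inv_nvalL_le (hG : G.RowFinite) :
    ∀ t : ℕ, ∀ v : V,
      ∑ l ∈ (Mset_finite hG t v).toFinset, (1 : ℝ) / (G.nvalL l : ℝ) ≤ 1 := by
  intro t
  induction t with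
  | zero =>
    intro v
    have : (Mset_finite hG 0 v).toFinset = {([] : List E)} := by
      ext l; simp [Mset_zero]
    rw [this]
    simp [nvalL]
  | succ t ih =>
    intro v
    by_cases hv : G.IsSink v
    · have : (Mset_finite hG (t + 1) v).toFinset = {([] : List E)} := by
        ext l; simp [Mset_succ_sink hv]
      rw [this]
      simp [nvalL]
    · -- v is not a sink
      set d : ℕ := {f : E | G.src f = v}.ncard with hd
      have hdcard : (hG v).toFinset.card = d := by
        rw [hd, Set.ncard_eq_toFinset_card _ (hG v)]
      classical
      have hdpos : 0 < d := by
        simp only [DirGraph.IsSink, not_forall, not_not] at hv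
        obtain ⟨e, he⟩ := hv
        exact Set.ncard_pos (hG v) |>.2 ⟨e, he⟩
      have hfin : (Mset_finite hG (t + 1) v).toFinset
          = (hG v).toFinset.biUnion
              (fun e => ((Mset_finite hG t (G.rng e)).toFinset.image (fun l => e :: l))) := by
        ext l
        simp only [Set.Finite.mem_toFinset, Finset.mem_biUnion, Finset.mem_image,
          Set.Finite.mem_toFinset]
        rw [Mset_succ_not_sink hv]
        simp only [Set.mem_iUnion, Set.mem_image, Set.mem_setOf_eq]
        tauto
      rw [hfin, Finset.sum_biUnion]
      · have key : ∀ e ∈ (hG v).toFinset,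
            ∑ l ∈ (Mset_finite hG t (G.rng e)).toFinset.image (fun l => e :: l),
              (1 : ℝ) / (G.nvalL l : ℝ) ≤ 1 / d := by
          intro e he
          rw [Finset.sum_image (by intro a _ b _ h; simpa using h)]
          have hsrc : G.src e = v := by simpa using he
          have : ∀ l ∈ (Mset_finite hG t (G.rng e)).toFinset,
              (1 : ℝ) / (G.nvalL (e :: l) : ℝ) = (1 / d) * (1 / (G.nvalL l : ℝ)) := by
            intro l _
            rw [nvalL_cons, hsrc, Nat.cast_mul, ← hd]
            rw [div_mul_div_comm, one_mul]
          rw [Finset.sum_congr rfl this, ← Finset.mul_sum]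
          calc (1 / (d : ℝ)) * ∑ l ∈ (Mset_finite hG t (G.rng e)).toFinset,
                1 / (G.nvalL l : ℝ)
              ≤ (1 / d) * 1 := by
                apply mul_le_mul_of_nonneg_left (ih (G.rng e))
                positivity
            _ = 1 / d := mul_one _
        calc ∑ e ∈ (hG v).toFinset, ∑ l ∈ _, (1 : ℝ) / (G.nvalL l : ℝ)
            ≤ ∑ e ∈ (hG v).toFinset, (1 : ℝ) / d := Finset.sum_le_sum key
          _ = (hG v).toFinset.card * (1 / d) := by rw [Finset.sum_const, nsmul_eq_mul]
          _ = 1 := by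
              rw [hdcard]
              field_simp
      · -- pairwise disjoint
        intro e _ e' _ hne
        apply Finset.disjoint_left.mpr
        intro l hl hl'
        simp only [Finset.mem_image] at hl hl'
        obtain ⟨a, -, rfl⟩ := hl
        obtain ⟨b, -, hb⟩ := hl'
        simp only [List.cons.injEq] at hb
        exact hne hb.1.symm

end Aux

theorem GPath.ext' {G : DirGraph V E} {p q : GPath G}
    (h1 : p.start = q.start) (h2 : p.edges = q.edges) : p = q := by
  cases p; cases q; simp_all

end DirGraph

open DirGraph

/-- For a row-finite graph `E`, `t ≥ 0` and `f : E^t → ℂ` vanishing at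
infinity (for every `ε > 0` the set `{λ ∈ E^t : |f(λ)| ≥ ε}` is finite), the function
`Φ^t f` vanishes at infinity on `E⁰`. Thus `Φ^t` maps `C₀(E^t)` into `C₀(E⁰)`. -/
theorem Phi_zero_at_infty {V E : Type} (G : DirGraph V E) (hG : G.RowFinite)
    (t : ℕ) (f : G.EtP t → ℂ)
    (hf : ∀ ε : ℝ, 0 < ε → {p : G.EtP t | ε ≤ ‖f p‖}.Finite) :
    ∀ ε : ℝ, 0 < ε → {v : V | ε ≤ ‖G.Phi t f v‖}.Finite := by
  intro ε hε
  classical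
  have key : ∀ v : V, ε ≤ ‖G.Phi t f v‖ → ∃ p : G.EtP t, p.1.start = v ∧ ε ≤ ‖f p‖ := by
    intro v hv
    have hsub : (fun q : G.EtP t => q.1.edges) '' {q : G.EtP t | q.1.start = v}
        ⊆ G.Mset t v := by
      rintro l ⟨q, hq, rfl⟩
      have hst : q.1.start = v := hq
      refine ⟨hst ▸ q.1.ok, ?_⟩
      rcases q.2 with h | ⟨h, hs⟩
      · exact Or.inl h
      · refine Or.inr ⟨h, ?_⟩
        have hr : G.rangeOf v q.1.edges = q.1.range := by rw [← hst]; rfl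
        rwa [hr]
    have hinj : Set.InjOn (fun q : G.EtP t => q.1.edges)
        {q : G.EtP t | q.1.start = v} := by
      intro a ha b hb h
      exact Subtype.ext (GPath.ext' (ha.trans hb.symm) h)
    have hSfin : {q : G.EtP t | q.1.start = v}.Finite :=
      Set.Finite.of_finite_image (Set.Finite.subset (Mset_finite hG t v) hsub) hinj
    have hPhi : G.Phi t f v = ∑ p ∈ hSfin.toFinset, f p / ((p.1.nval : ℂ)) := by
      exact finsum_mem_eq_finite_toFinset_sum _ hSfin
    rcases hSfin.toFinset.eq_empty_or_nonempty with he | hne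
    · exfalso
      rw [hPhi, he, Finset.sum_empty] at hv
      simp at hv
      linarith
    obtain ⟨p0, hp0, hmax⟩ := Finset.exists_max_image hSfin.toFinset (fun p => ‖f p‖) hne
    refine ⟨p0, (Set.Finite.mem_toFinset hSfin).mp hp0, ?_⟩
    have hsum1 : ∑ p ∈ hSfin.toFinset, (1 : ℝ) / ((p.1.nval : ℝ)) ≤ 1 := by
      have heq : ∑ p ∈ hSfin.toFinset, (1 : ℝ) / ((p.1.nval : ℝ))
          = ∑ l ∈ (Mset_finite hG t v).toFinset, (1 : ℝ) / (G.nvalL l : ℝ) := by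
        apply Finset.sum_nbij (i := fun q : G.EtP t => q.1.edges)
        · intro a ha
          rw [Set.Finite.mem_toFinset] at ha ⊢
          exact hsub ⟨a, ha, rfl⟩
        · intro a ha b hb h
          exact hinj (by simpa using ha) (by simpa using hb) h
        · intro l hl
          simp only [Set.Finite.coe_toFinset] at hl ⊢
          obtain ⟨hc, hm⟩ := hl
          refine ⟨⟨⟨v, l, hc⟩, ?_⟩, rfl, rfl⟩
          rcases hm with h | ⟨h, hs⟩
          · exact Or.inl h
          · exact Or.inr ⟨h, hs⟩
        · intro a _
          rfl
      rw [heq]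
      exact sum_inv_nvalL_le hG t v
    have hnorm : ‖G.Phi t f v‖ ≤ ‖f p0‖ := by
      rw [hPhi]
      calc ‖∑ p ∈ hSfin.toFinset, f p / ((p.1.nval : ℂ))‖
          ≤ ∑ p ∈ hSfin.toFinset, ‖f p / ((p.1.nval : ℂ))‖ := norm_sum_le _ _
        _ = ∑ p ∈ hSfin.toFinset, ‖f p‖ / ((p.1.nval : ℝ)) := by
            refine Finset.sum_congr rfl fun p _ => ?_
            rw [norm_div]
            norm_num
        _ ≤ ∑ p ∈ hSfin.toFinset, ‖f p0‖ * (1 / ((p.1.nval : ℝ))) := by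
            refine Finset.sum_le_sum fun p hp => ?_
            rw [mul_one_div]
            gcongr
            exact hmax p hp
        _ = ‖f p0‖ * ∑ p ∈ hSfin.toFinset, 1 / ((p.1.nval : ℝ)) := by
            rw [Finset.mul_sum]
        _ ≤ ‖f p0‖ * 1 := mul_le_mul_of_nonneg_left hsum1 (norm_nonneg _)
        _ = ‖f p0‖ := mul_one _
    exact hv.trans hnorm
  have hsub : {v : V | ε ≤ ‖G.Phi t f v‖}
      ⊆ (fun p : G.EtP t => p.1.start) '' {p : G.EtP t | ε ≤ ‖f p‖} := by
    intro v hv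
    obtain ⟨p, h1, h2⟩ := key v hv
    exact ⟨p, h2, h1⟩
  exact Set.Finite.subset ((hf ε hε).image _) hsub
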